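/- The poset (Ĩ, ≤_XY) is a complete lattice: every nonempty subset of Ĩ has a greatest lower bound and a least upper bound with respect to ≤_XY. -/
import Mathlib


/-- The set of intuitionistic fuzzy values Ĩ = {⟨μ,ν⟩ ∈ [0,1]² : μ + ν ≤ 1}. -/
def IFV : Set (ℝ × ℝ) :=
  {p | 0 ≤ p.1 ∧ p.1 ≤ 1 ∧ 0 ≤ p.2 ∧ p.2 ≤ 1 ∧ p.1 + p.2 ≤ 1}

/-- Score function s(α) = μ_α − ν_α. -/
def sc (p : ℝ × ℝ) : ℝ := p.1 - p.2

/-- Accuracy function h(α) = μ_α + ν_α. -/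
def ac (p : ℝ × ℝ) : ℝ := p.1 + p.2

/-- Strict Xu–Yager order. -/
def ltXY (a b : ℝ × ℝ) : Prop := sc a < sc b ∨ (sc a = sc b ∧ ac a < ac b)

/-- Nonstrict Xu–Yager order. -/
def leXY (a b : ℝ × ℝ) : Prop := sc a < sc b ∨ (sc a = sc b ∧ ac a ≤ ac b)

lemma sc_bounds {a : ℝ × ℝ} (ha : a ∈ IFV) :
    -1 ≤ sc a ∧ sc a ≤ 1 ∧ sc a ≤ ac a ∧ -sc a ≤ ac a ∧ ac a ≤ 1 := by
  obtain ⟨h1, h2, h3, h4, h5⟩ := ha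
  unfold sc ac
  refine ⟨by linarith, by linarith, by linarith, by linarith, by linarith⟩

lemma mk_sc {s h : ℝ} : sc ((s + h) / 2, (h - s) / 2) = s := by unfold sc; ring

lemma mk_ac {s h : ℝ} : ac ((s + h) / 2, (h - s) / 2) = h := by unfold ac; ring

lemma mk_mem {s h : ℝ} (h1 : s ≤ h) (h2 : -s ≤ h) (h3 : h ≤ 1) :
    ((s + h) / 2, (h - s) / 2) ∈ IFV := by
  refine ⟨by simp only; linarith, by simp only; linarith, by simp only; linarith,
    by simp only; linarith, by simp only; linarith⟩

/-- (Ĩ, ≤_XY) is a complete lattice: every nonempty subset has a greatest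
lower bound and a least upper bound in Ĩ with respect to ≤_XY. -/
theorem ifv_complete_lattice :
    ∀ Ω : Set (ℝ × ℝ), Ω ⊆ IFV → Ω.Nonempty →
      (∃ g ∈ IFV, (∀ a ∈ Ω, leXY g a) ∧
        ∀ b ∈ IFV, (∀ a ∈ Ω, leXY b a) → leXY b g) ∧
      (∃ u ∈ IFV, (∀ a ∈ Ω, leXY a u) ∧
        ∀ b ∈ IFV, (∀ a ∈ Ω, leXY a b) → leXY u b) := by
  intro Ω hΩ hne
  obtain ⟨a₀, ha₀⟩ := hne
  have hb₀ := sc_bounds (hΩ ha₀)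
  have hSne : (sc '' Ω).Nonempty := ⟨sc a₀, a₀, ha₀, rfl⟩
  have hSbddB : BddBelow (sc '' Ω) := by
    refine ⟨-1, ?_⟩
    rintro _ ⟨a, ha, rfl⟩
    exact (sc_bounds (hΩ ha)).1
  have hSbddA : BddAbove (sc '' Ω) := by
    refine ⟨1, ?_⟩
    rintro _ ⟨a, ha, rfl⟩
    exact (sc_bounds (hΩ ha)).2.1
  constructor
  · -- greatest lower bound
    set s0 := sInf (sc '' Ω) with hs0
    have hs0le : ∀ a ∈ Ω, s0 ≤ sc a := fun a ha => csInf_le hSbddB ⟨a, ha, rfl⟩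
    have hs0a : -1 ≤ s0 := le_csInf hSne (by rintro _ ⟨a, ha, rfl⟩; exact (sc_bounds (hΩ ha)).1)
    have hs0b : s0 ≤ 1 := le_trans (hs0le a₀ ha₀) hb₀.2.1
    by_cases hatt : ∃ a ∈ Ω, sc a = s0
    · obtain ⟨a₁, ha₁, hsa₁⟩ := hatt
      have hb₁ := sc_bounds (hΩ ha₁)
      set T := ac '' {a ∈ Ω | sc a = s0} with hT
      have hTne : T.Nonempty := ⟨ac a₁, a₁, ⟨ha₁, hsa₁⟩, rfl⟩
      have hTbdd : BddBelow T := by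
        refine ⟨-1, ?_⟩
        rintro _ ⟨a, ⟨ha, _⟩, rfl⟩
        have h := sc_bounds (hΩ ha)
        linarith [h.1, h.2.2.1]
      set h0 := sInf T with hh0
      have hh0le : ∀ a ∈ Ω, sc a = s0 → h0 ≤ ac a :=
        fun a ha hs => csInf_le hTbdd ⟨a, ⟨ha, hs⟩, rfl⟩
      have hh0a : s0 ≤ h0 := le_csInf hTne (by
        rintro _ ⟨a, ⟨ha, hs⟩, rfl⟩
        have h := sc_bounds (hΩ ha)
        linarith [h.2.2.1])
      have hh0a' : -s0 ≤ h0 := le_csInf hTne (by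
        rintro _ ⟨a, ⟨ha, hs⟩, rfl⟩
        have h := sc_bounds (hΩ ha)
        rw [← hs]
        exact h.2.2.2.1)
      have hh0b : h0 ≤ 1 := le_trans (hh0le a₁ ha₁ hsa₁) hb₁.2.2.2.2
      refine ⟨((s0 + h0) / 2, (h0 - s0) / 2), mk_mem hh0a hh0a' hh0b, ?_, ?_⟩
      · intro a ha
        rcases lt_or_eq_of_le (hs0le a ha) with h | h
        · left; rw [mk_sc]; exact h
        · right
          have h2 := hh0le a ha h.symm
          exact ⟨by rw [mk_sc]; exact h, by rw [mk_ac]; exact h2⟩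
      · intro b hb hlb
        have hsb : sc b ≤ s0 := le_csInf hSne (by
          rintro _ ⟨a, ha, rfl⟩
          rcases hlb a ha with h | h
          · exact le_of_lt h
          · exact le_of_eq h.1)
        rcases lt_or_eq_of_le hsb with h | h
        · left; rw [mk_sc]; exact h
        · right
          have hab : ac b ≤ h0 := le_csInf hTne (by
            rintro _ ⟨a, ⟨ha, hs⟩, rfl⟩
            rcases hlb a ha with h' | h'
            · exfalso; rw [hs, ← h] at h'; exact lt_irrefl _ h'
            · exact h'.2)
          exact ⟨by rw [mk_sc]; exact h, by rw [mk_ac]; exact hab⟩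
    · -- score not attained: glb is (score s0, accuracy 1)
      refine ⟨((s0 + 1) / 2, (1 - s0) / 2), mk_mem hs0b (by linarith) le_rfl, ?_, ?_⟩
      · intro a ha
        left
        have h1 : s0 ≠ sc a := fun h => hatt ⟨a, ha, h.symm⟩
        have h2 := lt_of_le_of_ne (hs0le a ha) h1
        rw [mk_sc]; exact h2
      · intro b hb hlb
        have hsb : sc b ≤ s0 := le_csInf hSne (by
          rintro _ ⟨a, ha, rfl⟩
          rcases hlb a ha with h | h
          · exact le_of_lt h
          · exact le_of_eq h.1)
        rcases lt_or_eq_of_le hsb with h | h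
        · left; rw [mk_sc]; exact h
        · right
          have h2 := (sc_bounds hb).2.2.2.2
          exact ⟨by rw [mk_sc]; exact h, by rw [mk_ac]; exact h2⟩
  · -- least upper bound
    set s1 := sSup (sc '' Ω) with hs1
    have hs1le : ∀ a ∈ Ω, sc a ≤ s1 := fun a ha => le_csSup hSbddA ⟨a, ha, rfl⟩
    have hs1a : s1 ≤ 1 := csSup_le hSne (by rintro _ ⟨a, ha, rfl⟩; exact (sc_bounds (hΩ ha)).2.1)
    have hs1b : -1 ≤ s1 := le_trans hb₀.1 (hs1le a₀ ha₀)
    by_cases hatt : ∃ a ∈ Ω, sc a = s1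
    · obtain ⟨a₁, ha₁, hsa₁⟩ := hatt
      have hb₁ := sc_bounds (hΩ ha₁)
      set T := ac '' {a ∈ Ω | sc a = s1} with hT
      have hTne : T.Nonempty := ⟨ac a₁, a₁, ⟨ha₁, hsa₁⟩, rfl⟩
      have hTbdd : BddAbove T := by
        refine ⟨1, ?_⟩
        rintro _ ⟨a, ⟨ha, _⟩, rfl⟩
        exact (sc_bounds (hΩ ha)).2.2.2.2
      set h1 := sSup T with hh1
      have hh1le : ∀ a ∈ Ω, sc a = s1 → ac a ≤ h1 :=
        fun a ha hs => le_csSup hTbdd ⟨a, ⟨ha, hs⟩, rfl⟩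
      have hh1a : s1 ≤ h1 := by
        have h := hh1le a₁ ha₁ hsa₁
        rw [← hsa₁]
        linarith [hb₁.2.2.1]
      have hh1a' : -s1 ≤ h1 := by
        have h := hh1le a₁ ha₁ hsa₁
        rw [← hsa₁]
        linarith [hb₁.2.2.2.1]
      have hh1b : h1 ≤ 1 := csSup_le hTne (by
        rintro _ ⟨a, ⟨ha, _⟩, rfl⟩
        exact (sc_bounds (hΩ ha)).2.2.2.2)
      refine ⟨((s1 + h1) / 2, (h1 - s1) / 2), mk_mem hh1a hh1a' hh1b, ?_, ?_⟩
      · intro a ha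
        rcases lt_or_eq_of_le (hs1le a ha) with h | h
        · left; rw [mk_sc]; exact h
        · right
          have h2 := hh1le a ha h
          exact ⟨by rw [mk_sc]; exact h, by rw [mk_ac]; exact h2⟩
      · intro b hb hub
        have hsb : s1 ≤ sc b := csSup_le hSne (by
          rintro _ ⟨a, ha, rfl⟩
          rcases hub a ha with h | h
          · exact le_of_lt h
          · exact le_of_eq h.1)
        rcases lt_or_eq_of_le hsb with h | h
        · left; rw [mk_sc]; exact h
        · right
          have hab : h1 ≤ ac b := csSup_le hTne (by
            rintro _ ⟨a, ⟨ha, hs⟩, rfl⟩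
            rcases hub a ha with h' | h'
            · exfalso; rw [hs, h] at h'; exact lt_irrefl _ h'
            · exact h'.2)
          exact ⟨by rw [mk_sc]; exact h, by rw [mk_ac]; exact hab⟩
    · -- score not attained: lub is (score s1, accuracy |s1|)
      have habs1 : |s1| ≤ 1 := abs_le.mpr ⟨hs1b, hs1a⟩
      have habs2 : s1 ≤ |s1| := le_abs_self s1
      have habs3' : -s1 ≤ |s1| := by rcases abs_cases s1 with ⟨h, h'⟩ | ⟨h, h'⟩ <;> rw [h] <;> linarith
      refine ⟨((s1 + |s1|) / 2, (|s1| - s1) / 2), mk_mem habs2 habs3' habs1, ?_, ?_⟩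
      · intro a ha
        left
        have h1 : sc a ≠ s1 := fun h => hatt ⟨a, ha, h⟩
        have h2 := lt_of_le_of_ne (hs1le a ha) h1
        rw [mk_sc]; exact h2
      · intro b hb hub
        have hsb : s1 ≤ sc b := csSup_le hSne (by
          rintro _ ⟨a, ha, rfl⟩
          rcases hub a ha with h | h
          · exact le_of_lt h
          · exact le_of_eq h.1)
        rcases lt_or_eq_of_le hsb with h | h
        · left; rw [mk_sc]; exact h
        · right
          refine ⟨by rw [mk_sc]; exact h, ?_⟩
          rw [mk_ac]
          have h2 := (sc_bounds hb).2.2.1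
          have h3 := (sc_bounds hb).2.2.2.1
          rw [← h] at h2 h3
          rcases abs_cases s1 with ⟨hh, _⟩ | ⟨hh, _⟩ <;> rw [hh] <;> linarith
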